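/- arXiv:1205.4874 — 3 statements merged into one kernel-verified Lean document; each statement's English description precedes it below -/
import Mathlib

section
/- Consider an authentication system with k source states, v messages and b encoding rules, where each encoding rule e has a valid-message set M(e) of size k. If every t-subset of the v messages is contained in M(e) for at least one of the b encoding rules, then b ≥ C(v,t)/C(k,t). -/
/-- Massey–Schöbi bound: if an authentication system with `k` source states and `v`
messages is `(t-1)`-fold secure against spoofing — so that every `t`-subset of the
`v` messages is contained in the valid-message set `M(e)` (a `k`-subset) of at least
one of the `b` encoding rules — then `b ≥ C(v,t)/C(k,t)`. -/
theorem massey_schoebi_bound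
    {M : Type*} [Fintype M] [DecidableEq M]
    (v k t b : ℕ) (hv : Fintype.card M = v) (htk : t ≤ k) (hkv : k ≤ v) (ht : 1 ≤ t)
    (rules : Fin b → Finset M)
    (hrules : ∀ e : Fin b, (rules e).card = k)
    (hcover : ∀ T : Finset M, T.card = t → ∃ e : Fin b, T ⊆ rules e) :
    (v.choose t : ℚ) / (k.choose t : ℚ) ≤ (b : ℚ) := by
  have hkey : v.choose t ≤ b * k.choose t := by
    have hsub : (Finset.univ : Finset M).powersetCard t ⊆
        Finset.univ.biUnion (fun e : Fin b => (rules e).powersetCard t) := by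
      intro T hT
      rw [Finset.mem_powersetCard] at hT
      obtain ⟨e, he⟩ := hcover T hT.2
      exact Finset.mem_biUnion.2 ⟨e, Finset.mem_univ _,
        Finset.mem_powersetCard.2 ⟨he, hT.2⟩⟩
    calc v.choose t = ((Finset.univ : Finset M).powersetCard t).card := by
          rw [Finset.card_powersetCard, Finset.card_univ, hv]
      _ ≤ (Finset.univ.biUnion (fun e : Fin b => (rules e).powersetCard t)).card :=
          Finset.card_le_card hsub
      _ ≤ ∑ e : Fin b, ((rules e).powersetCard t).card := Finset.card_biUnion_le
      _ = b * k.choose t := by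
          simp [Finset.card_powersetCard, hrules, Finset.sum_const]
  have hkt : 0 < (k.choose t : ℚ) := by
    exact_mod_cast Nat.choose_pos htk
  rw [div_le_iff₀ hkt]
  exact_mod_cast hkey
end

section
/- Suppose there is a t-(v,k,λ) design in which v divides the number b of blocks. Then the blocks can be ordered (each block given as a k-tuple of its distinct points) so that every point occurs in each of the k coordinate positions in exactly b/v of the ordered blocks. -/
open Finset

lemma sum_fiber_eq_forall {α : Type*} [DecidableEq α] (s : Finset α) (c : α → ℕ) (m : ℕ)
    (hle : ∀ x ∈ s, c x ≤ m) (hsum : ∑ x ∈ s, c x = s.card * m) : ∀ x ∈ s, c x = m := by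
  intro x hx
  by_contra hne
  have hlt : c x < m := lt_of_le_of_ne (hle x hx) hne
  have : ∑ y ∈ s, c y < ∑ y ∈ s, m :=
    Finset.sum_lt_sum hle ⟨x, hx, hlt⟩
  simp [Finset.sum_const, smul_eq_mul, hsum] at this

lemma step_matching {ι α : Type*} [DecidableEq α] [Fintype ι] (X : Finset α) (A : ι → Finset α)
    (n m v : ℕ) (hm : 1 ≤ m)
    (hsub : ∀ i, A i ⊆ X) (hcard : ∀ i, (A i).card = n + 1)
    (hdeg : ∀ x ∈ X, (Finset.univ.filter (fun i => x ∈ A i)).card ≤ (n + 1) * m)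
    (hXc : X.card = v) (hι : Fintype.card ι = v * m) :
    ∃ h : ι → α, (∀ i, h i ∈ A i) ∧
      ∀ x ∈ X, (Finset.univ.filter (fun i => h i = x)).card = m := by
  classical
  -- Hall's theorem on blown-up sets
  have hall : ∀ s : Finset ι, s.card ≤ (s.biUnion (fun i => (A i) ×ˢ (Finset.univ : Finset (Fin m)))).card := by
    intro s
    have hbu : s.biUnion (fun i => (A i) ×ˢ (Finset.univ : Finset (Fin m)))
        = (s.biUnion A) ×ˢ (Finset.univ : Finset (Fin m)) := by
      ext ⟨x, j⟩
      simp [Finset.mem_biUnion]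
    rw [hbu, Finset.card_product, Finset.card_univ, Fintype.card_fin]
    -- incidence double count
    have h1 : ∑ i ∈ s, (A i).card = (n+1) * s.card := by
      simp [hcard, Finset.sum_const, mul_comm]
    have h2 : ∑ i ∈ s, (A i).card
        = ∑ x ∈ s.biUnion A, (s.filter (fun i => x ∈ A i)).card := by
      have key : ∀ i ∈ s, (A i).card = ∑ x ∈ s.biUnion A, if x ∈ A i then 1 else 0 := by
        intro i hi
        have hf : (s.biUnion A).filter (fun x => x ∈ A i) = A i := by
          ext x
          simp only [Finset.mem_filter, Finset.mem_biUnion]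
          exact ⟨fun h => h.2, fun h => ⟨⟨i, hi, h⟩, h⟩⟩
        rw [← Finset.card_filter, hf]
      rw [Finset.sum_congr rfl key, Finset.sum_comm]
      exact Finset.sum_congr rfl fun x _ => (Finset.card_filter _ _).symm
    have h3 : ∑ x ∈ s.biUnion A, (s.filter (fun i => x ∈ A i)).card
        ≤ (s.biUnion A).card * ((n+1) * m) := by
      calc ∑ x ∈ s.biUnion A, (s.filter (fun i => x ∈ A i)).card
          ≤ ∑ x ∈ s.biUnion A, (n+1) * m := by
            apply Finset.sum_le_sum
            intro x hx
            have hxX : x ∈ X := by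
              obtain ⟨i, _, hxi⟩ := Finset.mem_biUnion.1 hx
              exact hsub i hxi
            exact le_trans (Finset.card_le_card (Finset.filter_subset_filter _ (Finset.subset_univ s))) (hdeg x hxX)
        _ = (s.biUnion A).card * ((n+1) * m) := by
            rw [Finset.sum_const, smul_eq_mul]
    have hineq : (n+1) * s.card ≤ (n+1) * ((s.biUnion A).card * m) := by
      calc (n+1) * s.card = ∑ i ∈ s, (A i).card := h1.symm
        _ ≤ (s.biUnion A).card * ((n+1) * m) := h2 ▸ h3
        _ = (n+1) * ((s.biUnion A).card * m) := by ring
    exact Nat.le_of_mul_le_mul_left hineq (Nat.succ_pos n)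
  obtain ⟨g, hginj, hgmem⟩ := (Finset.all_card_le_biUnion_card_iff_exists_injective _).1 hall
  refine ⟨fun i => (g i).1, fun i => (Finset.mem_product.1 (hgmem i)).1, ?_⟩
  -- fibers have card ≤ m
  have hle : ∀ x ∈ X, (Finset.univ.filter (fun i => (g i).1 = x)).card ≤ m := by
    intro x _
    have : (Finset.univ.filter (fun i => (g i).1 = x)).card ≤ (Finset.univ : Finset (Fin m)).card := by
      apply Finset.card_le_card_of_injOn (fun i => (g i).2)
      · intro i _; exact Finset.mem_univ _
      · intro i hi j hj hij
        apply hginj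
        have hi' := (Finset.mem_filter.1 hi).2
        have hj' := (Finset.mem_filter.1 hj).2
        exact Prod.ext (hi'.trans hj'.symm) hij
    simpa using this
  have hsum : ∑ x ∈ X, (Finset.univ.filter (fun i => (g i).1 = x)).card = X.card * m := by
    rw [← Finset.card_eq_sum_card_fiberwise (fun i _ => hsub i (Finset.mem_product.1 (hgmem i)).1)]
    rw [Finset.card_univ, hι, hXc]
  exact fun x hx => sum_fiber_eq_forall X _ m hle hsum x hx

lemma core_ordering {ι α : Type*} [DecidableEq α] [Fintype ι] (X : Finset α) (v m : ℕ)
    (hm : 1 ≤ m) (hXc : X.card = v) (hι : Fintype.card ι = v * m) :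
    ∀ n (A : ι → Finset α), (∀ i, A i ⊆ X) → (∀ i, (A i).card = n) →
    (∀ x ∈ X, (Finset.univ.filter (fun i => x ∈ A i)).card = n * m) →
    ∃ f : ι → Fin n → α, (∀ i, Function.Injective (f i)) ∧ (∀ i j, f i j ∈ A i) ∧
      ∀ x ∈ X, ∀ j, (Finset.univ.filter (fun i => f i j = x)).card = m := by
  classical
  intro n
  induction n with
  | zero =>
    intro A _ _ _
    exact ⟨fun i j => j.elim0, fun i j => j.elim0,
      fun i j => j.elim0, fun x _ j => j.elim0⟩
  | succ n ih =>
    intro A hsub hcard hdeg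
    obtain ⟨h, hmem, hfib⟩ := step_matching X A n m v hm hsub hcard
      (fun x hx => le_of_eq (hdeg x hx)) hXc hι
    set A' : ι → Finset α := fun i => (A i).erase (h i) with hA'
    have hsub' : ∀ i, A' i ⊆ X := fun i => (Finset.erase_subset _ _).trans (hsub i)
    have hcard' : ∀ i, (A' i).card = n := by
      intro i
      rw [hA', Finset.card_erase_of_mem (hmem i), hcard i]
      rfl
    have hdeg' : ∀ x ∈ X, (Finset.univ.filter (fun i => x ∈ A' i)).card = n * m := by
      intro x hx
      have hset : (Finset.univ.filter (fun i => x ∈ A' i))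
          = (Finset.univ.filter (fun i => x ∈ A i)) \ (Finset.univ.filter (fun i => h i = x)) := by
        ext i
        simp only [Finset.mem_filter, Finset.mem_sdiff, Finset.mem_univ, true_and, hA',
          Finset.mem_erase]
        constructor
        · rintro ⟨hne, hxA⟩
          exact ⟨hxA, fun he => hne he.symm⟩
        · rintro ⟨hxA, hne⟩
          exact ⟨fun he => hne he.symm, hxA⟩
      have hss : (Finset.univ.filter (fun i => h i = x)) ⊆ (Finset.univ.filter (fun i => x ∈ A i)) := by
        intro i hi
        simp only [Finset.mem_filter, Finset.mem_univ, true_and] at hi ⊢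
        rw [← hi]; exact hmem i
      rw [hset, Finset.card_sdiff_of_subset hss, hdeg x hx, hfib x hx]
      rw [Nat.succ_mul]
      omega
    obtain ⟨f', hinj', hmem', hcount'⟩ := ih A' hsub' hcard' hdeg'
    refine ⟨fun i => Fin.cons (h i) (f' i), ?_, ?_, ?_⟩
    · intro i
      rw [Fin.cons_injective_iff]
      constructor
      · rintro ⟨j, hj⟩
        have := hmem' i j
        rw [hj] at this
        exact (Finset.ne_of_mem_erase this) rfl
      · exact hinj' i
    · intro i j
      refine Fin.cases ?_ ?_ j
      · simpa using hmem i
      · intro j'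
        simpa using (Finset.erase_subset _ _) (hmem' i j')
    · intro x hx j
      refine Fin.cases ?_ ?_ j
      · simpa using hfib x hx
      · intro j'
        simpa using hcount' x hx j'

lemma card_filter_subtype {α : Type*} (p : α → Prop) [DecidablePred p] (s : Finset α) :
    (Finset.univ.filter (fun a : {x // x ∈ s} => p a.val)).card = (s.filter p).card := by
  rw [Finset.univ_eq_attach, Finset.filter_attach, Finset.card_map, Finset.card_attach]

lemma card_powersetCard_filter_mem {α : Type*} [DecidableEq α] (S : Finset α) (x : α)
    (hx : x ∈ S) (t : ℕ) (ht : 1 ≤ t) :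
    ((S.powersetCard t).filter (fun T => x ∈ T)).card
      = ((S.erase x).powersetCard (t - 1)).card := by
  apply Finset.card_bij (fun T _ => T.erase x)
  · intro T hT
    simp only [Finset.mem_filter, Finset.mem_powersetCard] at hT
    obtain ⟨⟨hTS, hTc⟩, hxT⟩ := hT
    rw [Finset.mem_powersetCard]
    exact ⟨Finset.erase_subset_erase x hTS, by rw [Finset.card_erase_of_mem hxT, hTc]⟩
  · intro T hT T' hT' he
    simp only [Finset.mem_filter, Finset.mem_powersetCard] at hT hT'
    rw [← Finset.insert_erase hT.2, ← Finset.insert_erase hT'.2, he]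
  · intro U hU
    rw [Finset.mem_powersetCard] at hU
    obtain ⟨hUS, hUc⟩ := hU
    have hxU : x ∉ U := fun hxU => (Finset.mem_erase.1 (hUS hxU)).1 rfl
    refine ⟨insert x U, ?_, ?_⟩
    · simp only [Finset.mem_filter, Finset.mem_powersetCard]
      refine ⟨⟨?_, ?_⟩, Finset.mem_insert_self x U⟩
      · exact Finset.insert_subset hx (hUS.trans (Finset.erase_subset x S))
      · rw [Finset.card_insert_of_notMem hxU, hUc]
        omega
    · rw [Finset.erase_insert hxU]

lemma design_degree {α : Type*} [DecidableEq α] (X : Finset α) (𝓑 : Finset (Finset α))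
    (t v k lam : ℕ) (ht : 1 ≤ t) (htk : t ≤ k) (hkv : k ≤ v)
    (hX : X.card = v)
    (hblocks : ∀ B ∈ 𝓑, B ⊆ X ∧ B.card = k)
    (hdesign : ∀ T ⊆ X, T.card = t → (𝓑.filter (fun B => T ⊆ B)).card = lam)
    (x : α) (hx : x ∈ X) :
    (𝓑.filter (fun B => x ∈ B)).card * (k - 1).choose (t - 1)
      = lam * (v - 1).choose (t - 1) := by
  classical
  set 𝒯 := (X.powersetCard t).filter (fun T => x ∈ T) with h𝒯
  -- double count incidences
  have hswap : ∑ B ∈ 𝓑, ((B.powersetCard t).filter (fun T => x ∈ T)).card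
      = ∑ T ∈ 𝒯, (𝓑.filter (fun B => T ⊆ B)).card := by
    have key : ∀ B ∈ 𝓑, (B.powersetCard t).filter (fun T => x ∈ T)
        = 𝒯.filter (fun T => T ⊆ B) := by
      intro B hB
      ext T
      simp only [h𝒯, Finset.mem_filter, Finset.mem_powersetCard]
      constructor
      · rintro ⟨⟨hTB, hTc⟩, hxT⟩
        exact ⟨⟨⟨hTB.trans (hblocks B hB).1, hTc⟩, hxT⟩, hTB⟩
      · rintro ⟨⟨⟨_, hTc⟩, hxT⟩, hTB⟩
        exact ⟨⟨hTB, hTc⟩, hxT⟩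
    calc ∑ B ∈ 𝓑, ((B.powersetCard t).filter (fun T => x ∈ T)).card
        = ∑ B ∈ 𝓑, ∑ T ∈ 𝒯, if T ⊆ B then 1 else 0 := by
          refine Finset.sum_congr rfl fun B hB => ?_
          rw [key B hB, Finset.card_filter]
      _ = ∑ T ∈ 𝒯, ∑ B ∈ 𝓑, if T ⊆ B then 1 else 0 := Finset.sum_comm
      _ = ∑ T ∈ 𝒯, (𝓑.filter (fun B => T ⊆ B)).card := by
          exact Finset.sum_congr rfl fun T _ => (Finset.card_filter _ _).symm
  -- left side evaluates
  have hleft : ∑ B ∈ 𝓑, ((B.powersetCard t).filter (fun T => x ∈ T)).card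
      = (𝓑.filter (fun B => x ∈ B)).card * (k - 1).choose (t - 1) := by
    rw [← Finset.sum_filter_add_sum_filter_not 𝓑 (fun B => x ∈ B)]
    have h1 : ∀ B ∈ 𝓑.filter (fun B => x ∈ B),
        ((B.powersetCard t).filter (fun T => x ∈ T)).card = (k - 1).choose (t - 1) := by
      intro B hB
      rw [Finset.mem_filter] at hB
      rw [card_powersetCard_filter_mem B x hB.2 t ht, Finset.card_powersetCard,
        Finset.card_erase_of_mem hB.2, (hblocks B hB.1).2]
    have h2 : ∀ B ∈ 𝓑.filter (fun B => ¬ x ∈ B),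
        ((B.powersetCard t).filter (fun T => x ∈ T)).card = 0 := by
      intro B hB
      rw [Finset.mem_filter] at hB
      rw [Finset.card_eq_zero, Finset.filter_eq_empty_iff]
      intro T hT
      rw [Finset.mem_powersetCard] at hT
      exact fun hxT => hB.2 (hT.1 hxT)
    rw [Finset.sum_congr rfl h1, Finset.sum_congr rfl h2, Finset.sum_const,
      Finset.sum_const, smul_eq_mul, smul_eq_mul, mul_zero, add_zero]
  -- right side evaluates
  have hright : ∑ T ∈ 𝒯, (𝓑.filter (fun B => T ⊆ B)).card
      = lam * (v - 1).choose (t - 1) := by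
    have h1 : ∀ T ∈ 𝒯, (𝓑.filter (fun B => T ⊆ B)).card = lam := by
      intro T hT
      simp only [h𝒯, Finset.mem_filter, Finset.mem_powersetCard] at hT
      exact hdesign T hT.1.1 hT.1.2
    rw [Finset.sum_congr rfl h1, Finset.sum_const, smul_eq_mul, mul_comm]
    congr 1
    rw [h𝒯, card_powersetCard_filter_mem X x hx t ht, Finset.card_powersetCard,
      Finset.card_erase_of_mem hx, hX]
  rw [← hleft, hswap, hright]

/-- If in a `t`-`(v,k,λ)` design `v` divides the number of blocks `b`, then the blocks
can be ordered (each block written as an injective `k`-tuple of its points) so that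
every point occurs in each of the `k` coordinate positions in exactly `b / v` of the
ordered blocks. -/
theorem design_block_ordering
    {α : Type*} [DecidableEq α] (X : Finset α) (𝓑 : Finset (Finset α))
    (t v k lam : ℕ) (ht : 1 ≤ t) (htk : t ≤ k) (hkv : k ≤ v) (hlam : 1 ≤ lam)
    (hX : X.card = v)
    (hblocks : ∀ B ∈ 𝓑, B ⊆ X ∧ B.card = k)
    (hdesign : ∀ T ⊆ X, T.card = t → (𝓑.filter (fun B => T ⊆ B)).card = lam)
    (hdvd : v ∣ 𝓑.card) :
    ∃ f : {B // B ∈ 𝓑} → Fin k → α,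
      (∀ C : {B // B ∈ 𝓑}, Function.Injective (f C)) ∧
      (∀ C : {B // B ∈ 𝓑}, ∀ j : Fin k, f C j ∈ C.val) ∧
      (∀ x ∈ X, ∀ j : Fin k,
        (Finset.univ.filter (fun C : {B // B ∈ 𝓑} => f C j = x)).card = 𝓑.card / v) := by
  classical
  have hv1 : 1 ≤ v := le_trans ht (le_trans htk hkv)
  -- 𝓑 is nonempty
  obtain ⟨T0, hT0X, hT0c⟩ := Finset.exists_subset_card_eq
    (show t ≤ X.card by rw [hX]; exact htk.trans hkv)
  have hlamT := hdesign T0 hT0X hT0c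
  have hb0 : 0 < 𝓑.card := by
    rcases Finset.eq_empty_or_nonempty 𝓑 with h | h
    · rw [h] at hlamT; simp at hlamT; omega
    · exact Finset.card_pos.2 h
  set m := 𝓑.card / v with hm
  have hbm : 𝓑.card = v * m := by
    rw [hm, Nat.mul_div_cancel' hdvd]
  have hm1 : 1 ≤ m := by
    rcases Nat.eq_zero_or_pos m with h | h
    · rw [h, mul_zero] at hbm; omega
    · exact h
  have hchoose : 0 < (k - 1).choose (t - 1) := Nat.choose_pos (by omega)
  have hDconst : ∀ x ∈ X, ∀ y ∈ X,
      (𝓑.filter (fun B => x ∈ B)).card = (𝓑.filter (fun B => y ∈ B)).card := by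
    intro x hx y hy
    have h1 := design_degree X 𝓑 t v k lam ht htk hkv hX hblocks hdesign x hx
    have h2 := design_degree X 𝓑 t v k lam ht htk hkv hX hblocks hdesign y hy
    exact Nat.eq_of_mul_eq_mul_right hchoose (h1.trans h2.symm)
  have hsum : ∑ x ∈ X, (𝓑.filter (fun B => x ∈ B)).card = 𝓑.card * k := by
    calc ∑ x ∈ X, (𝓑.filter (fun B => x ∈ B)).card
        = ∑ x ∈ X, ∑ B ∈ 𝓑, if x ∈ B then 1 else 0 := by
          exact Finset.sum_congr rfl fun x _ => Finset.card_filter _ _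
      _ = ∑ B ∈ 𝓑, ∑ x ∈ X, if x ∈ B then 1 else 0 := Finset.sum_comm
      _ = ∑ B ∈ 𝓑, (X.filter (fun x => x ∈ B)).card := by
          exact Finset.sum_congr rfl fun B _ => (Finset.card_filter _ _).symm
      _ = ∑ B ∈ 𝓑, k := by
          refine Finset.sum_congr rfl fun B hB => ?_
          rw [Finset.filter_mem_eq_inter, Finset.inter_eq_right.2 (hblocks B hB).1,
            (hblocks B hB).2]
      _ = 𝓑.card * k := by rw [Finset.sum_const, smul_eq_mul]
  have hdegx : ∀ x ∈ X, (𝓑.filter (fun B => x ∈ B)).card = k * m := by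
    intro x hx
    have hvD : v * (𝓑.filter (fun B => x ∈ B)).card = 𝓑.card * k := by
      rw [← hsum, Finset.sum_congr rfl (fun y hy => hDconst y hy x hx),
        Finset.sum_const, smul_eq_mul, hX]
    rw [hbm] at hvD
    have : v * (𝓑.filter (fun B => x ∈ B)).card = v * (k * m) := by
      rw [hvD]; ring
    exact Nat.eq_of_mul_eq_mul_left hv1 this
  have hcardι : Fintype.card {B // B ∈ 𝓑} = v * m := by
    rw [Fintype.card_coe, hbm]
  obtain ⟨f, h1, h2, h3⟩ := core_ordering X v m hm1 hX hcardι k (fun C => C.val)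
    (fun C => (hblocks C.val C.prop).1) (fun C => (hblocks C.val C.prop).2)
    (fun x hx => by
      rw [card_filter_subtype (fun B => x ∈ B) 𝓑, hdegx x hx, mul_comm])
  exact ⟨f, h1, h2, fun x hx j => h3 x hx j⟩
end

section
/- In an authentication system where encoding rules are used with equal probability, perfect secrecy holds if and only if every message occurs with the same frequency in each column of the encoding matrix; formally: if for every message m and every pair of source states s, s', the number of encoding rules e with e(s) = m equals the number with e(s') = m, and the source distribution together with the uniform key distribution is used, then p_S(s | m) = p_S(s) for all s and all m with p_M(m) > 0. -/
/-! Exchanging the sums over keys and source states, the probability of a message `m` becomes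
`∑ s', N(m, s') / |E| · p_S(s')`, where `N(m, s')` counts the keys with `e(s') = m`. Equal column
frequencies make `N(m, s') = N(m, s)` for all `s'`, so `p_M(m) = N(m, s) / |E|`, which is exactly
the factor multiplying `p_S(s)` in the numerator of Bayes' formula. -/

open Finset

section ColumnFrequency

variable {S M E R : Type*} [Fintype S] [Fintype E] [DecidableEq M] [AddCommMonoid R]

theorem sum_ite_enc_eq_sum_card_smul (enc : E → S → M) (m : M) (w : S → R) :
    ∑ e, ∑ s, (if enc e s = m then w s else 0) = ∑ s, #{e | enc e s = m} • w s := by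
  rw [Finset.sum_comm]
  exact Finset.sum_congr rfl fun s _ => by rw [← Finset.sum_filter, Finset.sum_const]

theorem sum_ite_enc_eq_card_smul_sum (enc : E → S → M) (m : M) (s₀ : S)
    (hcol : ∀ s, #{e | enc e s = m} = #{e | enc e s₀ = m}) (w : S → R) :
    ∑ e, ∑ s, (if enc e s = m then w s else 0) = #{e | enc e s₀ = m} • ∑ s, w s := by
  simp only [sum_ite_enc_eq_sum_card_smul, hcol, Finset.smul_sum]

end ColumnFrequency

theorem uniform_keys_column_frequency_perfect_secrecy_general
    {S M E : Type*} [Fintype S] [Fintype E]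
    [DecidableEq M]
    (enc : E → S → M)
    (pS : S → ℝ) (hpSsum : ∑ s, pS s = 1)
    (hcol : ∀ m : M, ∀ s s' : S,
      (Finset.univ.filter (fun e : E => enc e s = m)).card
        = (Finset.univ.filter (fun e : E => enc e s' = m)).card) :
    ∀ s : S, ∀ m : M,
      (0 < ∑ e : E, ∑ s' : S,
          (if enc e s' = m then (1 / (Fintype.card E : ℝ)) * pS s' else 0)) →
      (((Finset.univ.filter (fun e : E => enc e s = m)).card : ℝ)
          * (1 / (Fintype.card E : ℝ)) * pS s)
        / (∑ e : E, ∑ s' : S,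
            (if enc e s' = m then (1 / (Fintype.card E : ℝ)) * pS s' else 0))
      = pS s := by
  intro s m hpM
  have hpM_eq : ∑ e : E, ∑ s' : S,
      (if enc e s' = m then (1 / (Fintype.card E : ℝ)) * pS s' else 0)
        = #{e | enc e s = m} * (1 / (Fintype.card E : ℝ)) := by
    rw [sum_ite_enc_eq_card_smul_sum enc m s (fun s' => hcol m s' s), ← Finset.mul_sum, hpSsum,
      nsmul_eq_mul, mul_one]
  rw [hpM_eq] at hpM ⊢
  exact mul_div_cancel_left₀ (pS s) hpM.ne'

/-- If in an authentication system the encoding rules are used with equal probability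
and every message occurs with the same frequency in each column of the encoding
matrix (i.e. for all `m, s, s'` the number of rules `e` with `e(s) = m` equals the
number with `e(s') = m`), then the system has perfect secrecy: for every source
state `s` and every message `m` with `p_M(m) > 0`, the posterior probability of `s`
given `m` equals the prior `p_S(s)`. -/
theorem uniform_keys_column_frequency_perfect_secrecy
    {S M E : Type*} [Fintype S] [Fintype M] [Fintype E]
    [DecidableEq S] [DecidableEq M]
    (hE : 0 < Fintype.card E)
    (enc : E → S → M) (hinj : ∀ e : E, Function.Injective (enc e))
    (pS : S → ℝ) (hpS : ∀ s, 0 ≤ pS s) (hpSsum : ∑ s, pS s = 1)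
    (hcol : ∀ m : M, ∀ s s' : S,
      (Finset.univ.filter (fun e : E => enc e s = m)).card
        = (Finset.univ.filter (fun e : E => enc e s' = m)).card) :
    ∀ s : S, ∀ m : M,
      (0 < ∑ e : E, ∑ s' : S,
          (if enc e s' = m then (1 / (Fintype.card E : ℝ)) * pS s' else 0)) →
      (((Finset.univ.filter (fun e : E => enc e s = m)).card : ℝ)
          * (1 / (Fintype.card E : ℝ)) * pS s)
        / (∑ e : E, ∑ s' : S,
            (if enc e s' = m then (1 / (Fintype.card E : ℝ)) * pS s' else 0))
      = pS s :=
  uniform_keys_column_frequency_perfect_secrecy_general enc pS hpSsum hcol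
end
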